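/- Let $x$ and $k$ be positive integers, and assume that $k$ is not even whenever $x \equiv 5 \pmod{9}$. Then: (a) if $k = 1$, then $v_3(T_k(x)) = v_3(x)$; (b) if $x \equiv 0 \pmod{3}$ and $k \ge 2$ is even, then $v_3(T_k(x)) = v_3(x) - 1$; (c) if $x \equiv 0 \pmod{3}$ and $k > 3$ is odd, then $v_3(T_k(x)) = v_3(k x^2)$; (d) if $x \equiv 0 \pmod{3}$ and $k = 3$, then $v_3(T_k(x)) = v_3(x^2(5x+3))$; (e) if $x \equiv 1$ or $2 \pmod{3}$ and $k \ge 3$ is odd, then $v_3(T_k(x)) = 0$; (f) if $x \equiv 2$ or $8 \pmod{9}$ and $k \ge 2$ is even, then $v_3(T_k(x)) = 0$; (g) if $x \equiv 1 \pmod{3}$ and $k \ge 2$ is even, then $v_3(T_k(x)) = v_3(2x+1) - 1$. -/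

import Mathlib

/-- `T k x = (x+1)^k + (x+2)^k + ... + (2x)^k`. -/
def T (k x : ℕ) : ℕ := ∑ i ∈ Finset.Icc (x + 1) (2 * x), i ^ k

/-!
For even `k`, a full residue system modulo `3 ^ (a + 1)` has `k`-th power sum
`≡ 2 * 3 ^ a`: passing from `3 ^ a` to `3 ^ (a + 1)` multiplies the power sum by `3`
modulo `3 ^ (a + 1)`, because `(s + t * 3 ^ a) ^ k ≡ s ^ k + k * s ^ (k - 1) * t * 3 ^ a`
and `0 + 1 + 2 ≡ 0 (mod 3)`. If `3 ^ (a + 1) * y = x`, then `T k x` is the sum over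
`y` such systems, which gives (b). For (g), pairing `i` with `2x + 1 - i` shows
`2 * T k x ≡ ∑ i < 2x + 1, i ^ k` modulo every power of `3` dividing `2x + 1`.
For odd `k` and `3 ∣ x`, pairing `i` with `3x - i` and expanding `(3x - i) ^ k` to first
order gives `2 * T k x + x ^ k ≡ 3kx * T (k - 1) x + (2x) ^ k` modulo
`3 ^ (v₃ k + 2 v₃ x + 1)`, and the even case applied to `T (k - 1) x` yields (c).
Parts (a) and (d) follow from the closed forms of `T 1` and `T 3`, and (e), (f) from
computing `T k x` modulo `3` by induction on `x`.
-/

open Finset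

lemma padicValNat_eq_of_modEq {p n c v : ℕ} [Fact p.Prime] (hn : n ≠ 0)
    (h : n ≡ c * p ^ v [MOD p ^ (v + 1)]) (hc : ¬ p ∣ c) : padicValNat p n = v := by
  have hdvd : p ^ v ∣ n :=
    (Nat.modEq_zero_iff_dvd.1 ((h.of_dvd (pow_dvd_pow p v.le_succ)).trans
      (Nat.modEq_zero_iff_dvd.2 (dvd_mul_left _ _))))
  have hndvd : ¬ p ^ (v + 1) ∣ n := fun hd => by
    have : p ^ v * p ∣ p ^ v * c := by
      rw [← pow_succ, mul_comm]
      exact Nat.modEq_zero_iff_dvd.1 (h.symm.trans (Nat.modEq_zero_iff_dvd.2 hd))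
    exact hc (Nat.dvd_of_mul_dvd_mul_left (pow_pos (Fact.out : p.Prime).pos v) this)
  rw [padicValNat_dvd_iff_le hn] at hdvd hndvd
  omega

lemma padicValNat_pow_mul {p n : ℕ} [Fact p.Prime] (e : ℕ) (hn : ¬ p ∣ n) :
    padicValNat p (p ^ e * n) = e :=
  padicValNat_eq_of_modEq (mul_ne_zero (pow_ne_zero _ (Fact.out : p.Prime).ne_zero)
    (by rintro rfl; exact hn (dvd_zero p))) (by rw [mul_comm]) hn

lemma exists_eq_pow_succ_mul_of_dvd {p n : ℕ} [Fact p.Prime] (hn : n ≠ 0) (hp : p ∣ n) :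
    ∃ a m, ¬ p ∣ m ∧ n = p ^ (a + 1) * m := by
  obtain ⟨e, m, hm, rfl⟩ := Nat.exists_eq_pow_mul_and_not_dvd hn p (Fact.out : p.Prime).ne_one
  rcases e with - | a
  · rw [pow_zero, one_mul] at hp
    exact absurd hp hm
  · exact ⟨a, m, hm, rfl⟩

lemma padicValNat_eq_of_mul_eq_mul {p a b m n : ℕ} [Fact p.Prime] (ha : ¬ p ∣ a)
    (hb : ¬ p ∣ b) (hm : m ≠ 0) (hn : n ≠ 0) (h : a * m = n * b) : padicValNat p m = padicValNat p n := by
  have h' := congrArg (padicValNat p) h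
  rw [padicValNat.mul (by rintro rfl; exact ha (dvd_zero p)) hm,
    padicValNat.mul hn (by rintro rfl; exact hb (dvd_zero p)),
    padicValNat.eq_zero_of_not_dvd ha, padicValNat.eq_zero_of_not_dvd hb] at h'
  omega

lemma padicValNat_le_padicValNat_choose_add {q k s : ℕ} [Fact q.Prime] (hs : s ≠ 0)
    (hsk : s ≤ k) : padicValNat q k ≤ padicValNat q (k.choose s) + padicValNat q s := by
  obtain ⟨k, rfl⟩ : ∃ k', k = k' + 1 := ⟨k - 1, by omega⟩
  obtain ⟨s, rfl⟩ : ∃ s', s = s' + 1 := ⟨s - 1, by omega⟩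
  have h := congrArg (padicValNat q) (Nat.add_one_mul_choose_eq k s)
  rw [padicValNat.mul (by omega : k + 1 ≠ 0) (Nat.choose_pos (by omega)).ne',
    padicValNat.mul (Nat.choose_pos hsk).ne' (by omega : s + 1 ≠ 0)] at h
  omega

/-- A refinement of `sq_dvd_add_pow_sub_sub`: the term `C(k, s) p ^ s` with `s ≥ 2` has
valuation at least `v_q k - v_q s + (m + 1) s`, and `v_q s < s`. -/
theorem pow_dvd_add_pow_sub_sub {q : ℕ} [Fact q.Prime] (x p : ℤ) (k m : ℕ)
    (hp : (q : ℤ) ^ (m + 1) ∣ p) :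
    (q : ℤ) ^ (padicValNat q k + 2 * m + 1) ∣ (x + p) ^ k - x ^ (k - 1) * p * k - x ^ k := by
  rcases k with - | n
  · simp
  · simp only [add_pow, sum_range_succ, add_tsub_cancel_left, pow_one, Nat.choose_succ_self_right,
      Nat.cast_succ, tsub_self, pow_zero, mul_one, Nat.choose_self, Nat.cast_zero, zero_add,
      Nat.succ_sub_succ_eq_sub, Nat.sub_zero]
    suffices (q : ℤ) ^ (padicValNat q (n + 1) + 2 * m + 1) ∣
        ∑ i ∈ range n, x ^ i * p ^ (n + 1 - i) * ((n + 1).choose i : ℤ) by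
      convert! this; abel
    refine dvd_sum fun i hi => ?_
    rw [mem_range] at hi
    set s := n + 1 - i
    have hC : (n + 1).choose i = (n + 1).choose s :=
      (Nat.choose_symm (n := n + 1) (k := i) (by omega)).symm
    have hv := padicValNat_le_padicValNat_choose_add (q := q) (k := n + 1) (show s ≠ 0 by omega)
      (by omega)
    have hvs := Nat.padicValNat_lt_self (p := q) (show s ≠ 0 by omega)
    have hexp : padicValNat q (n + 1) + 2 * m + 1 ≤
        (m + 1) * s + padicValNat q ((n + 1).choose s) := by
      have : m * 2 ≤ m * s := Nat.mul_le_mul_left m (by omega)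
      linarith
    calc (q : ℤ) ^ (padicValNat q (n + 1) + 2 * m + 1)
        ∣ (q : ℤ) ^ ((m + 1) * s) * (q : ℤ) ^ padicValNat q ((n + 1).choose s) := by
          rw [← pow_add]; exact pow_dvd_pow _ hexp
      _ ∣ p ^ s * ((n + 1).choose s : ℤ) := by
          refine mul_dvd_mul (pow_mul (q : ℤ) (m + 1) s ▸ pow_dvd_pow_of_dvd hp s) ?_
          exact_mod_cast pow_padicValNat_dvd
      _ ∣ x ^ i * p ^ s * ((n + 1).choose i : ℤ) := by
          rw [hC, mul_assoc]; exact dvd_mul_left _ _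

lemma pow_add_sub_pow_modEq {q k m p i : ℕ} [Fact q.Prime] (hk : Odd k) (hp : q ^ (m + 1) ∣ p)
    (hi : i ≤ p) :
    i ^ k + (p - i) ^ k ≡ k * p * i ^ (k - 1) [MOD q ^ (padicValNat q k + 2 * m + 1)] := by
  rw [← Int.natCast_modEq_iff]
  refine (Int.modEq_iff_dvd.2 ?_).symm
  have h := pow_dvd_add_pow_sub_sub (-(i : ℤ)) p k m (by exact_mod_cast hp)
  rw [hk.neg_pow, (Nat.Odd.sub_odd hk odd_one).neg_pow] at h
  push_cast [Nat.cast_sub hi]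
  rw [show (i : ℤ) ^ k + ((p : ℤ) - i) ^ k - k * p * i ^ (k - 1)
    = (-(i : ℤ) + p) ^ k - i ^ (k - 1) * p * k - -(i : ℤ) ^ k by ring]
  exact h

lemma pow_modEq_pow_of_dvd_add {M a b k : ℕ} (hk : Even k) (h : M ∣ a + b) :
    a ^ k ≡ b ^ k [MOD M] := by
  rw [← Int.natCast_modEq_iff]
  have hab : (a : ℤ) ≡ -b [ZMOD M] :=
    (Int.modEq_iff_dvd.2 (by simpa using Int.natCast_dvd_natCast.2 h)).symm
  push_cast
  rw [← hk.neg_pow (b : ℤ)]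
  exact hab.pow k

lemma add_pow_modEq_sq (s c k : ℕ) : (s + c) ^ k ≡ s ^ k + s ^ (k - 1) * c * k [MOD c ^ 2] := by
  rw [← Int.natCast_modEq_iff]
  refine (Int.modEq_iff_dvd.2 ?_).symm
  push_cast
  have h := sq_dvd_add_pow_sub_sub (c : ℤ) s k
  rwa [sub_sub, add_comm (_ * _)] at h

lemma pow_mod_three_of_odd {k : ℕ} (hk : Odd k) (n : ℕ) : n ^ k % 3 = n % 3 := by
  obtain ⟨j, rfl⟩ := hk
  have : n % 3 < 3 := Nat.mod_lt _ (by norm_num)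
  rw [Nat.pow_mod]
  interval_cases n % 3 <;> simp [pow_succ, pow_mul, Nat.mul_mod, Nat.pow_mod]

lemma pow_mod_three_of_even {k : ℕ} (hk : Even k) (hk0 : k ≠ 0) (n : ℕ) :
    n ^ k % 3 = if n % 3 = 0 then 0 else 1 := by
  obtain ⟨j, rfl⟩ := hk
  have : n % 3 < 3 := Nat.mod_lt _ (by norm_num)
  rw [Nat.pow_mod, ← two_mul]
  interval_cases n % 3 <;> simp_all [pow_mul, Nat.pow_mod]

lemma padicValNat_three_add_three_le {k : ℕ} (hk : 3 < k) : padicValNat 3 k + 3 ≤ k := by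
  have h1 : 3 ^ padicValNat 3 k ≤ k := Nat.le_of_dvd (by omega) pow_padicValNat_dvd
  rcases Nat.lt_or_ge (padicValNat 3 k) 2 with h | h
  · omega
  · have h2 := Nat.lt_pow_self (n := padicValNat 3 k - 2) (by norm_num : 1 < 3)
    have h3 : 3 ^ padicValNat 3 k = 3 ^ (padicValNat 3 k - 2) * 9 := by
      rw [show (9 : ℕ) = 3 ^ 2 by norm_num, ← pow_add, Nat.sub_add_cancel h]
    omega

def powerSum (k n : ℕ) : ℕ := ∑ i ∈ range n, i ^ k

@[simp]
lemma powerSum_zero (k : ℕ) : powerSum k 0 = 0 := rfl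

lemma powerSum_mul_add_modEq (k M q r : ℕ) :
    powerSum k (M * q + r) ≡ q * powerSum k M + powerSum k r [MOD M] := by
  induction q with
  | zero => simp [Nat.ModEq.refl]
  | succ q ih =>
    have hshift : ∑ j ∈ range (M * q + r), (M + j) ^ k ≡ powerSum k (M * q + r) [MOD M] :=
      Nat.ModEq.sum fun j _ => Nat.add_modEq_left.pow k
    rw [show M * (q + 1) + r = M + (M * q + r) by ring, powerSum, sum_range_add, ← powerSum]
    calc powerSum k M + ∑ j ∈ range (M * q + r), (M + j) ^ k
        ≡ powerSum k M + (q * powerSum k M + powerSum k r) [MOD M] := (hshift.trans ih).add_left _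
      _ = (q + 1) * powerSum k M + powerSum k r := by ring

lemma powerSum_mul_modEq_sq (k N t : ℕ) :
    powerSum k (N * t) ≡
      t * powerSum k N + (∑ u ∈ range t, u) * N * k * powerSum (k - 1) N [MOD N ^ 2] := by
  induction t with
  | zero => simp [powerSum]; rfl
  | succ t ih =>
    have hblock : ∑ s ∈ range N, (N * t + s) ^ k
        ≡ powerSum k N + t * N * k * powerSum (k - 1) N [MOD N ^ 2] := by
      calc ∑ s ∈ range N, (N * t + s) ^ k
          ≡ ∑ s ∈ range N, (s ^ k + s ^ (k - 1) * (N * t) * k) [MOD N ^ 2] :=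
            Nat.ModEq.sum fun s _ => by
              rw [add_comm]
              exact (add_pow_modEq_sq s (N * t) k).of_dvd
                (pow_dvd_pow_of_dvd (dvd_mul_right N t) 2)
        _ = powerSum k N + t * N * k * powerSum (k - 1) N := by
          rw [sum_add_distrib, powerSum, powerSum, mul_sum]
          congr 1
          exact sum_congr rfl fun s _ => by ring
    rw [mul_add_one, powerSum, sum_range_add, ← powerSum, sum_range_succ]
    calc powerSum k (N * t) + ∑ s ∈ range N, (N * t + s) ^ k
        ≡ (t * powerSum k N + (∑ u ∈ range t, u) * N * k * powerSum (k - 1) N)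
          + (powerSum k N + t * N * k * powerSum (k - 1) N) [MOD N ^ 2] := ih.add hblock
      _ = _ := by ring

lemma powerSum_mul_modEq {p N : ℕ} (k : ℕ) (hp : Odd p) (hN : p ∣ N) :
    powerSum k (N * p) ≡ p * powerSum k N [MOD N * p] := by
  obtain ⟨j, rfl⟩ := hp
  have hgauss : ∑ u ∈ range (2 * j + 1), u = (2 * j + 1) * j := by
    have := sum_range_id_mul_two (2 * j + 1)
    rw [Nat.add_sub_cancel] at this
    linarith
  have hsq : N * (2 * j + 1) ∣ N ^ 2 := by rw [sq]; exact mul_dvd_mul_left N hN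
  refine ((powerSum_mul_modEq_sq k N _).of_dvd hsq).trans ?_
  calc (2 * j + 1) * powerSum k N + (∑ u ∈ range (2 * j + 1), u) * N * k * powerSum (k - 1) N
      = (2 * j + 1) * powerSum k N + N * (2 * j + 1) * (j * k * powerSum (k - 1) N) := by
        rw [hgauss]; ring
    _ ≡ (2 * j + 1) * powerSum k N + 0 [MOD N * (2 * j + 1)] :=
        Nat.ModEq.add_left _ (Nat.modEq_zero_iff_dvd.2 (dvd_mul_right _ _))
    _ = (2 * j + 1) * powerSum k N := add_zero _

lemma powerSum_pow_succ_modEq {p : ℕ} (k : ℕ) (hp : Odd p) (a : ℕ) :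
    powerSum k (p ^ (a + 1)) ≡ p ^ a * powerSum k p [MOD p ^ (a + 1)] := by
  induction a with
  | zero => simp [Nat.ModEq.refl]
  | succ a ih =>
    have h := powerSum_mul_modEq k hp (dvd_pow_self p a.succ_ne_zero)
    rw [← pow_succ] at h
    refine h.trans ?_
    have := ih.mul_left' p
    rwa [← mul_assoc, ← pow_succ', ← pow_succ'] at this

lemma powerSum_three_pow_succ_modEq {k : ℕ} (hk : Even k) (hk0 : k ≠ 0) (a : ℕ) :
    powerSum k (3 ^ (a + 1)) ≡ 2 * 3 ^ a [MOD 3 ^ (a + 1)] := by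
  have h3 : powerSum k 3 ≡ 2 [MOD 3] := by
    have h2 : 2 ^ k % 3 = 1 := by simpa using pow_mod_three_of_even hk hk0 2
    simp only [powerSum, sum_range_succ, range_zero, sum_empty, zero_pow hk0, one_pow]
    unfold Nat.ModEq
    omega
  refine (powerSum_pow_succ_modEq k (by decide) a).trans ?_
  rw [pow_succ, mul_comm 2]
  exact h3.mul_left' _

lemma T_eq_sum_Ico (k x : ℕ) : T k x = ∑ i ∈ Ico (x + 1) (2 * x + 1), i ^ k := by
  rw [T, Finset.Ico_add_one_right_eq_Icc]

lemma T_add_powerSum (k x : ℕ) : T k x + powerSum k (x + 1) = powerSum k (2 * x + 1) := by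
  rw [T_eq_sum_Ico, powerSum, powerSum, add_comm, sum_range_add_sum_Ico _ (by omega)]

lemma T_succ (k x : ℕ) :
    T k (x + 1) + (x + 1) ^ k = T k x + (2 * x + 1) ^ k + (2 * x + 2) ^ k := by
  have h := T_add_powerSum k x
  have h' := T_add_powerSum k (x + 1)
  rw [show 2 * (x + 1) + 1 = 2 * x + 1 + 1 + 1 by ring] at h'
  simp only [powerSum, sum_range_succ] at h h' ⊢
  omega

lemma T_pos (k : ℕ) {x : ℕ} (hx : 0 < x) : 0 < T k x :=
  sum_pos (fun i hi => pow_pos (by simp at hi; omega) _) (nonempty_Icc.2 (by omega))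

lemma two_mul_T_one (x : ℕ) : 2 * T 1 x = x * (3 * x + 1) := by
  induction x with
  | zero => rfl
  | succ n ih =>
    have := T_succ 1 n
    simp only [pow_one] at this
    have : (n + 1) * (3 * (n + 1) + 1) = n * (3 * n + 1) + 6 * n + 4 := by ring
    omega

lemma four_mul_T_three (x : ℕ) : 4 * T 3 x = x ^ 2 * (3 * x + 1) * (5 * x + 3) := by
  induction x with
  | zero => rfl
  | succ n ih =>
    have := T_succ 3 n
    have : (n + 1) ^ 2 * (3 * (n + 1) + 1) * (5 * (n + 1) + 3) + 4 * (n + 1) ^ 3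
        = n ^ 2 * (3 * n + 1) * (5 * n + 3) + 4 * (2 * n + 1) ^ 3 + 4 * (2 * n + 2) ^ 3 := by ring
    omega

lemma T_mod_three_of_odd {k : ℕ} (hk : Odd k) (x : ℕ) : T k x % 3 = 2 * x % 3 := by
  induction x with
  | zero => rfl
  | succ n ih =>
    have := T_succ k n
    have := pow_mod_three_of_odd hk (n + 1)
    have := pow_mod_three_of_odd hk (2 * n + 1)
    have := pow_mod_three_of_odd hk (2 * n + 2)
    omega

/-- `x - (x + 1) / 3` counts the `i ∈ (x, 2x]` prime to `3`, each with `i ^ k ≡ 1`. -/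
lemma T_mod_three_of_even {k : ℕ} (hk : Even k) (hk0 : k ≠ 0) (x : ℕ) :
    T k x % 3 = (x - (x + 1) / 3) % 3 := by
  induction x with
  | zero => rfl
  | succ n ih =>
    have := T_succ k n
    have h1 := pow_mod_three_of_even hk hk0 (n + 1)
    have h2 := pow_mod_three_of_even hk hk0 (2 * n + 1)
    have h3 := pow_mod_three_of_even hk hk0 (2 * n + 2)
    obtain h | h | h : n % 3 = 0 ∨ n % 3 = 1 ∨ n % 3 = 2 := by omega
    all_goals split_ifs at h1 h2 h3 <;> omega

lemma T_mul_modEq (k M y : ℕ) : T k (M * y) ≡ y * powerSum k M [MOD M] := by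
  have h := T_add_powerSum k (M * y)
  rw [show 2 * (M * y) + 1 = M * (2 * y) + 1 by ring] at h
  refine Nat.ModEq.add_right_cancel (powerSum_mul_add_modEq k M y 1) ?_
  calc T k (M * y) + powerSum k (M * y + 1) = powerSum k (M * (2 * y) + 1) := h
    _ ≡ 2 * y * powerSum k M + powerSum k 1 [MOD M] := powerSum_mul_add_modEq k M (2 * y) 1
    _ = y * powerSum k M + (y * powerSum k M + powerSum k 1) := by ring

lemma T_three_pow_mul_modEq {k : ℕ} (hk : Even k) (hk0 : k ≠ 0) (a y : ℕ) :
    T k (3 ^ (a + 1) * y) ≡ 2 * y * 3 ^ a [MOD 3 ^ (a + 1)] := by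
  refine (T_mul_modEq k _ y).trans ?_
  rw [mul_comm 2 y, mul_assoc]
  exact (powerSum_three_pow_succ_modEq hk hk0 a).mul_left y

lemma two_mul_T_modEq {M k x : ℕ} (hk : Even k) (hk0 : k ≠ 0) (hM : M ∣ 2 * x + 1) :
    2 * T k x ≡ powerSum k (2 * x + 1) [MOD M] := by
  have hreflect : ∑ i ∈ Ico (x + 1) (2 * x + 1), (2 * x + 1 - i) ^ k = powerSum k (x + 1) := by
    rw [sum_Ico_reflect (fun j => j ^ k) _ (by omega),
      show 2 * x + 1 + 1 - (2 * x + 1) = 1 by omega, show 2 * x + 1 + 1 - (x + 1) = x + 1 by omega,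
      powerSum, range_eq_Ico,
      sum_eq_sum_Ico_succ_bot (Nat.succ_pos x), zero_pow hk0, zero_add]
  have hpair : T k x ≡ powerSum k (x + 1) [MOD M] := by
    rw [T_eq_sum_Ico, ← hreflect]
    refine Nat.ModEq.sum fun i hi => pow_modEq_pow_of_dvd_add hk ?_
    rw [mem_Ico] at hi
    rwa [add_tsub_cancel_of_le hi.2.le]
  rw [two_mul, ← T_add_powerSum]
  exact hpair.add_left _

lemma two_mul_T_add_pow (k x : ℕ) : 2 * T k x + x ^ k =
    ∑ i ∈ Ico (x + 1) (2 * x + 1), (i ^ k + (3 * x - i) ^ k) + (2 * x) ^ k := by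
  have hreflect :
      ∑ i ∈ Ico (x + 1) (2 * x + 1), (3 * x - i) ^ k = ∑ j ∈ Ico x (2 * x), j ^ k := by
    rw [sum_Ico_reflect (fun j => j ^ k) _ (by omega), show 3 * x + 1 - (2 * x + 1) = x by omega,
      show 3 * x + 1 - (x + 1) = 2 * x by omega]
  have hshift : ∑ j ∈ Ico x (2 * x), j ^ k + (2 * x) ^ k = x ^ k + T k x := by
    rw [T_eq_sum_Ico, ← sum_Ico_succ_top (by omega), sum_eq_sum_Ico_succ_bot (by omega)]
  rw [sum_add_distrib, hreflect, ← T_eq_sum_Ico]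
  omega

lemma two_mul_T_add_pow_modEq {q k m x : ℕ} [Fact q.Prime] (hk : Odd k)
    (hx : q ^ (m + 1) ∣ 3 * x) :
    2 * T k x + x ^ k ≡ k * (3 * x) * T (k - 1) x + (2 * x) ^ k
      [MOD q ^ (padicValNat q k + 2 * m + 1)] := by
  rw [two_mul_T_add_pow, T_eq_sum_Ico (k - 1), mul_sum]
  refine Nat.ModEq.add_right _ (Nat.ModEq.sum fun i hi => pow_add_sub_pow_modEq hk hx ?_)
  rw [mem_Ico] at hi
  omega

theorem padicValNat_T_one {x : ℕ} (hx : 0 < x) : padicValNat 3 (T 1 x) = padicValNat 3 x :=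
  padicValNat_eq_of_mul_eq_mul (a := 2) (b := 3 * x + 1) (by norm_num) (by omega)
    (T_pos 1 hx).ne' hx.ne' (two_mul_T_one x)

theorem padicValNat_T_three {x : ℕ} (hx : 0 < x) :
    padicValNat 3 (T 3 x) = padicValNat 3 (x ^ 2 * (5 * x + 3)) :=
  padicValNat_eq_of_mul_eq_mul (a := 4) (b := 3 * x + 1) (by norm_num) (by omega)
    (T_pos 3 hx).ne' (by positivity) (by rw [four_mul_T_three]; ring)

theorem padicValNat_T_of_odd_of_not_three_dvd {k x : ℕ} (hk : Odd k) (hx : x % 3 ≠ 0) :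
    padicValNat 3 (T k x) = 0 :=
  padicValNat.eq_zero_of_not_dvd (by have := T_mod_three_of_odd hk x; omega)

theorem padicValNat_T_of_even_of_mod_nine {k x : ℕ} (hk : Even k) (hk0 : k ≠ 0)
    (hx : x % 9 = 2 ∨ x % 9 = 8) : padicValNat 3 (T k x) = 0 :=
  padicValNat.eq_zero_of_not_dvd (by have := T_mod_three_of_even hk hk0 x; omega)

theorem padicValNat_T_of_even_of_three_dvd {k x : ℕ} (hk : Even k) (hk0 : k ≠ 0) (hx : 0 < x)
    (h3 : 3 ∣ x) : padicValNat 3 (T k x) = padicValNat 3 x - 1 := by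
  obtain ⟨a, y, hy, rfl⟩ := exists_eq_pow_succ_mul_of_dvd hx.ne' h3
  rw [padicValNat_pow_mul _ hy, padicValNat_eq_of_modEq (T_pos k hx).ne'
    (T_three_pow_mul_modEq hk hk0 a y) (by omega), Nat.add_sub_cancel]

theorem padicValNat_T_of_even_of_mod_three_eq_one {k x : ℕ} (hk : Even k) (hk0 : k ≠ 0)
    (hx : x % 3 = 1) : padicValNat 3 (T k x) = padicValNat 3 (2 * x + 1) - 1 := by
  obtain ⟨b, w, hw, hxw⟩ := exists_eq_pow_succ_mul_of_dvd (p := 3) (n := 2 * x + 1) (by omega)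
    (by omega)
  have h2T : 2 * T k x ≡ 2 * (w * 3 ^ b) [MOD 3 ^ (b + 1)] :=
    calc 2 * T k x ≡ powerSum k (3 ^ (b + 1) * w) [MOD 3 ^ (b + 1)] :=
          hxw ▸ two_mul_T_modEq hk hk0 ⟨w, hxw⟩
      _ ≡ w * powerSum k (3 ^ (b + 1)) [MOD 3 ^ (b + 1)] := by
          simpa using powerSum_mul_add_modEq k (3 ^ (b + 1)) w 0
      _ ≡ w * (2 * 3 ^ b) [MOD 3 ^ (b + 1)] :=
          (powerSum_three_pow_succ_modEq hk hk0 b).mul_left w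
      _ = 2 * (w * 3 ^ b) := by ring
  have hT := Nat.ModEq.cancel_left_of_coprime (Nat.Coprime.pow_left _ (by norm_num)) h2T
  rw [hxw, padicValNat_pow_mul _ hw, padicValNat_eq_of_modEq (T_pos k (by omega)).ne' hT hw,
    Nat.add_sub_cancel]

theorem padicValNat_T_of_odd_of_three_dvd {k x : ℕ} (hk : Odd k) (hk3 : 3 < k) (hx : 0 < x)
    (h3 : 3 ∣ x) : padicValNat 3 (T k x) = padicValNat 3 (k * x ^ 2) := by
  obtain ⟨a, y, hy, rfl⟩ := exists_eq_pow_succ_mul_of_dvd hx.ne' h3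
  obtain ⟨V, κ, hκ, hkV⟩ :=
    Nat.exists_eq_pow_mul_and_not_dvd (by omega : k ≠ 0) 3 (by norm_num)
  have hV : padicValNat 3 k = V := hkV ▸ padicValNat_pow_mul V hκ
  set x := 3 ^ (a + 1) * y with hxy
  have hsum := two_mul_T_add_pow_modEq (q := 3) (m := a + 1) (x := x) hk ⟨y, by rw [hxy]; ring⟩
  rw [hV] at hsum
  have hlin : k * (3 * x) * T (k - 1) x ≡ 2 * (κ * y ^ 2 * 3 ^ (V + 2 * (a + 1)))
      [MOD 3 ^ (V + 2 * (a + 1) + 1)] := by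
    have h := (T_three_pow_mul_modEq (Nat.Odd.sub_odd hk odd_one) (by omega) a y).mul_left'
      (k * (3 * x))
    rw [show k * (3 * x) * (2 * y * 3 ^ a) = 2 * (κ * y ^ 2 * 3 ^ (V + 2 * (a + 1))) by
      rw [hxy, hkV]; ring] at h
    exact h.of_dvd ⟨κ * y, by rw [hxy, hkV]; ring⟩
  have hpow : 3 ^ (V + 2 * (a + 1) + 1) ∣ x ^ k := by
    have hVk := padicValNat_three_add_three_le hk3
    rw [hV] at hVk
    refine (pow_dvd_pow 3 (by nlinarith : V + 2 * (a + 1) + 1 ≤ (a + 1) * k)).trans ?_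
    rw [pow_mul, hxy, mul_pow]
    exact dvd_mul_right _ _
  have h2T : 2 * T k x ≡ 2 * (κ * y ^ 2 * 3 ^ (V + 2 * (a + 1)))
      [MOD 3 ^ (V + 2 * (a + 1) + 1)] := by
    refine Nat.ModEq.add_right_cancel (Nat.modEq_zero_iff_dvd.2 hpow) ?_
    refine hsum.trans ?_
    simpa using hlin.add (Nat.modEq_zero_iff_dvd.2 (mul_pow 2 x k ▸ dvd_mul_of_dvd_right hpow _))
  have hT := Nat.ModEq.cancel_left_of_coprime (Nat.Coprime.pow_left _ (by norm_num)) h2T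
  have hκy : ¬ 3 ∣ κ * y ^ 2 := by
    rw [Nat.Prime.dvd_mul Nat.prime_three]
    exact not_or.2 ⟨hκ, fun h => hy (Nat.prime_three.dvd_of_dvd_pow h)⟩
  rw [padicValNat_eq_of_modEq (T_pos k hx).ne' hT hκy,
    show k * x ^ 2 = 3 ^ (V + 2 * (a + 1)) * (κ * y ^ 2) by rw [hxy, hkV]; ring,
    padicValNat_pow_mul _ hκy]

theorem stmt_19_general (x k : ℕ) (hx : 0 < x) :
    (k = 1 → padicValNat 3 (T k x) = padicValNat 3 x) ∧
    (x % 3 = 0 → 2 ≤ k → Even k → padicValNat 3 (T k x) = padicValNat 3 x - 1) ∧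
    (x % 3 = 0 → 3 < k → Odd k → padicValNat 3 (T k x) = padicValNat 3 (k * x ^ 2)) ∧
    (x % 3 = 0 → k = 3 →
      padicValNat 3 (T k x) = padicValNat 3 (x ^ 2 * (5 * x + 3))) ∧
    ((x % 3 = 1 ∨ x % 3 = 2) → 3 ≤ k → Odd k → padicValNat 3 (T k x) = 0) ∧
    ((x % 9 = 2 ∨ x % 9 = 8) → 2 ≤ k → Even k → padicValNat 3 (T k x) = 0) ∧
    (x % 3 = 1 → 2 ≤ k → Even k →
      padicValNat 3 (T k x) = padicValNat 3 (2 * x + 1) - 1) := by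
  refine ⟨?_, ?_, ?_, ?_, ?_, ?_, ?_⟩
  · rintro rfl
    exact padicValNat_T_one hx
  · intro h3 hk2 hk
    exact padicValNat_T_of_even_of_three_dvd hk (by omega) hx (Nat.dvd_of_mod_eq_zero h3)
  · intro h3 hk3 hk
    exact padicValNat_T_of_odd_of_three_dvd hk hk3 hx (Nat.dvd_of_mod_eq_zero h3)
  · rintro - rfl
    exact padicValNat_T_three hx
  · rintro h3 - hk
    exact padicValNat_T_of_odd_of_not_three_dvd hk (by omega)
  · intro h9 hk2 hk
    exact padicValNat_T_of_even_of_mod_nine hk (by omega) h9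
  · intro h3 hk2 hk
    exact padicValNat_T_of_even_of_mod_three_eq_one hk (by omega) h3

theorem stmt_19 (x k : ℕ) (hx : 0 < x) (hk : 0 < k)
    (h59 : x % 9 = 5 → ¬ Even k) :
    (k = 1 → padicValNat 3 (T k x) = padicValNat 3 x) ∧
    (x % 3 = 0 → 2 ≤ k → Even k → padicValNat 3 (T k x) = padicValNat 3 x - 1) ∧
    (x % 3 = 0 → 3 < k → Odd k → padicValNat 3 (T k x) = padicValNat 3 (k * x ^ 2)) ∧
    (x % 3 = 0 → k = 3 →
      padicValNat 3 (T k x) = padicValNat 3 (x ^ 2 * (5 * x + 3))) ∧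
    ((x % 3 = 1 ∨ x % 3 = 2) → 3 ≤ k → Odd k → padicValNat 3 (T k x) = 0) ∧
    ((x % 9 = 2 ∨ x % 9 = 8) → 2 ≤ k → Even k → padicValNat 3 (T k x) = 0) ∧
    (x % 3 = 1 → 2 ≤ k → Even k →
      padicValNat 3 (T k x) = padicValNat 3 (2 * x + 1) - 1) :=
  stmt_19_general x k hx
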